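/- arXiv:1701.08446 — 3 statements merged into one kernel-verified Lean document; each statement's English description precedes it below -/
import Mathlib

section
/- For every real number r > 0, the function x ↦ log((tanh x)/x) / log((r² − x²)/r²) is strictly decreasing on the open interval (0, r). -/
/-!
With `F x = log (tanh x / x)` and `G x = log ((r² - x²) / r²)`, both `F` and `G` tend to `0`
at `0⁺` and `G' < 0`, so by the monotone form of l'Hôpital's rule it suffices that `F' / G'` is
strictly decreasing. Since `F' x = 2 / sinh 2x - 1 / x` and `G' x = -2x / (r² - x²)`, the ratio
is `2 (r² - x²) ψ (2x)` with `ψ t = 1 / t² - 1 / (t sinh t)`, a product of two positive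
decreasing factors; `ψ' < 0` amounts to `t sinh t + t² cosh t < 2 sinh² t`, which follows by
comparing power series.
-/

open Real Set Filter Topology

open scoped Nat

section MonotoneLHopitalRule

variable {a b : ℝ}

theorem lt_of_hasDerivAt_neg_of_tendsto_nhdsGT {ψ ψ' : ℝ → ℝ} {L : ℝ} (hab : a < b)
    (hψ : ∀ y ∈ Ioc a b, HasDerivAt ψ (ψ' y) y) (hψ' : ∀ y ∈ Ioo a b, ψ' y < 0)
    (hL : Tendsto ψ (𝓝[>] a) (𝓝 L)) : ψ b < L := by
  have hanti : StrictAntiOn ψ (Ioc a b) := by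
    refine strictAntiOn_of_hasDerivWithinAt_neg (f' := ψ') (convex_Ioc a b)
      (fun y hy => (hψ y hy).continuousAt.continuousWithinAt) (fun y hy => ?_) ?_
    · rw [interior_Ioc] at hy ⊢
      exact (hψ y (Ioo_subset_Ioc_self hy)).hasDerivWithinAt
    · rwa [interior_Ioc]
  obtain ⟨m, ham, hmb⟩ := exists_between hab
  have hψm : ψ m ≤ L := ge_of_tendsto hL <| by
    filter_upwards [Ioo_mem_nhdsGT ham] with y hy
    exact (hanti ⟨hy.1, hy.2.le.trans hmb.le⟩ ⟨ham, hmb.le⟩ hy.2).le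
  exact (hanti ⟨ham, hmb.le⟩ (right_mem_Ioc.2 hab) hmb).trans_le hψm

variable {f g f' g' : ℝ → ℝ}

theorem lt_deriv_div_mul_of_strictAntiOn (hf : ∀ x ∈ Ioo a b, HasDerivAt f (f' x) x)
    (hg : ∀ x ∈ Ioo a b, HasDerivAt g (g' x) x) (hfa : Tendsto f (𝓝[>] a) (𝓝 0))
    (hga : Tendsto g (𝓝[>] a) (𝓝 0)) (hg' : ∀ x ∈ Ioo a b, g' x < 0)
    (hfg : StrictAntiOn (fun x => f' x / g' x) (Ioo a b)) {x : ℝ} (hx : x ∈ Ioo a b) :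
    f x < f' x / g' x * g x := by
  set c := f' x / g' x
  have hsub : Ioc a x ⊆ Ioo a b := Ioc_subset_Ioo_right hx.2
  have hψ' : ∀ y ∈ Ioo a x, f' y - c * g' y < 0 := by
    intro y hy
    have hyab : y ∈ Ioo a b := hsub (Ioo_subset_Ioc_self hy)
    have hgy := hg' y hyab
    calc f' y - c * g' y = g' y * (f' y / g' y - c) := by field_simp [hgy.ne]
      _ < 0 := mul_neg_of_neg_of_pos hgy (sub_pos.2 (hfg hyab hx hy.2))
  have := lt_of_hasDerivAt_neg_of_tendsto_nhdsGT (ψ := fun y => f y - c * g y) hx.1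
    (fun y hy => (hf y (hsub hy)).sub ((hg y (hsub hy)).const_mul c)) hψ'
    (by simpa using hfa.sub (hga.const_mul c))
  linarith

theorem strictAntiOn_div_of_strictAntiOn_deriv_div (hf : ∀ x ∈ Ioo a b, HasDerivAt f (f' x) x)
    (hg : ∀ x ∈ Ioo a b, HasDerivAt g (g' x) x) (hfa : Tendsto f (𝓝[>] a) (𝓝 0))
    (hga : Tendsto g (𝓝[>] a) (𝓝 0)) (hg' : ∀ x ∈ Ioo a b, g' x < 0)
    (hfg : StrictAntiOn (fun x => f' x / g' x) (Ioo a b)) :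
    StrictAntiOn (fun x => f x / g x) (Ioo a b) := by
  have hg_neg : ∀ x ∈ Ioo a b, g x < 0 := fun x hx =>
    lt_of_hasDerivAt_neg_of_tendsto_nhdsGT hx.1 (fun y hy => hg y (Ioc_subset_Ioo_right hx.2 hy))
      (fun y hy => hg' y (Ioo_subset_Ioo_right hx.2.le hy)) hga
  have hdiv : ∀ x ∈ Ioo a b,
      HasDerivAt (fun x => f x / g x) ((f' x * g x - f x * g' x) / g x ^ 2) x :=
    fun x hx => (hf x hx).div (hg x hx) (hg_neg x hx).ne
  refine strictAntiOn_of_hasDerivWithinAt_neg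
    (f' := fun x => (f' x * g x - f x * g' x) / g x ^ 2) (convex_Ioo a b)
    (fun x hx => (hdiv x hx).continuousAt.continuousWithinAt) (fun x hx => ?_) (fun x hx => ?_)
  · rw [interior_Ioo] at hx ⊢
    exact (hdiv x hx).hasDerivWithinAt
  · rw [interior_Ioo] at hx
    have hg'x := hg' x hx
    have hnum : f' x * g x - f x * g' x = g' x * (f' x / g' x * g x - f x) := by
      field_simp [hg'x.ne]
    rw [hnum]
    exact div_neg_of_neg_of_pos (mul_neg_of_neg_of_pos hg'x
      (sub_pos.2 (lt_deriv_div_mul_of_strictAntiOn hf hg hfa hga hg' hfg hx)))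
      (sq_pos_of_neg (hg_neg x hx))

end MonotoneLHopitalRule

/- Compare Taylor coefficients: that of `t ^ (2n+2)` is `4 ^ (n+1) / (2n+2)!` in
`2 sinh² t = cosh 2t - 1` and `(2n+2)² / (2n+2)!` on the left, with equality for `n ≤ 1` only. -/
theorem mul_sinh_add_sq_mul_cosh_lt {t : ℝ} (ht : t ≠ 0) :
    t * sinh t + t ^ 2 * cosh t < 2 * sinh t ^ 2 := by
  have hcosh_two_mul : HasSum (fun n : ℕ => (2 * t) ^ (2 * (n + 1)) / (2 * (n + 1))!)
      (2 * sinh t ^ 2) := by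
    rw [show 2 * sinh t ^ 2 = cosh (2 * t) - 1 by rw [cosh_two_mul, cosh_sq]; ring]
    simpa using (hasSum_nat_add_iff' 1).2 (hasSum_cosh (2 * t))
  refine hasSum_lt (i := 2) (fun n => ?_) ?_
    (((hasSum_sinh t).mul_left t).add ((hasSum_cosh t).mul_left (t ^ 2))) hcosh_two_mul
  · have hT : 0 ≤ t ^ (2 * n + 2) := Even.pow_nonneg ⟨n + 1, by ring⟩ t
    have h2n : (2 * n + 2 : ℝ) ≤ 2 ^ (n + 1) := by
      have hn : n < 2 ^ n := Nat.lt_two_pow_self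
      have : 2 * n + 2 ≤ 2 ^ (n + 1) := by rw [pow_succ]; omega
      exact_mod_cast this
    simp only [show 2 * (n + 1) = 2 * n + 1 + 1 by ring, Nat.factorial_succ, Nat.cast_mul,
      Nat.cast_add, Nat.cast_ofNat, Nat.cast_one]
    calc _ = (2 * n + 2) ^ 2 * t ^ (2 * n + 2) / ((2 * n + 2) * (2 * n + 1) * (2 * n)!) := by
            field_simp
            ring
      _ ≤ (2 ^ (n + 1)) ^ 2 * t ^ (2 * n + 2) / ((2 * n + 2) * (2 * n + 1) * (2 * n)!) := by
            gcongr
      _ = _ := by ring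
  · have h6 : 0 < t ^ 6 := Even.pow_pos ⟨3, rfl⟩ ht
    norm_num [Nat.factorial, mul_pow]
    linarith

theorem inv_mul_sinh_lt_inv_sq {t : ℝ} (ht : 0 < t) : (t * sinh t)⁻¹ < (t ^ 2)⁻¹ := by
  rw [sq]
  exact inv_strictAnti₀ (by positivity) (mul_lt_mul_of_pos_left (self_lt_sinh_iff.2 ht) ht)

theorem hasDerivAt_inv_sq_sub_inv_mul_sinh {t : ℝ} (ht : t ≠ 0) :
    HasDerivAt (fun s => (s ^ 2)⁻¹ - (s * sinh s)⁻¹)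
      ((t * sinh t + t ^ 2 * cosh t - 2 * sinh t ^ 2) / (t ^ 3 * sinh t ^ 2)) t := by
  have hs : sinh t ≠ 0 := sinh_ne_zero.2 ht
  have h := ((hasDerivAt_pow 2 t).inv (pow_ne_zero 2 ht)).sub
    (((hasDerivAt_id t).mul (hasDerivAt_sinh t)).inv (mul_ne_zero ht hs))
  refine h.congr_deriv ?_
  simp only [id, Pi.mul_apply]
  field_simp
  ring

theorem strictAntiOn_inv_sq_sub_inv_mul_sinh :
    StrictAntiOn (fun t => (t ^ 2)⁻¹ - (t * sinh t)⁻¹) (Ioi 0) := by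
  refine strictAntiOn_of_hasDerivWithinAt_neg
    (f' := fun t => (t * sinh t + t ^ 2 * cosh t - 2 * sinh t ^ 2) / (t ^ 3 * sinh t ^ 2))
    (convex_Ioi 0)
    (fun t ht => (hasDerivAt_inv_sq_sub_inv_mul_sinh (ne_of_gt ht)).continuousAt.continuousWithinAt)
    (fun t ht => ?_) (fun t ht => ?_)
  · rw [interior_Ioi] at ht ⊢
    exact (hasDerivAt_inv_sq_sub_inv_mul_sinh (ne_of_gt ht)).hasDerivWithinAt
  · rw [interior_Ioi] at ht
    have hs : 0 < sinh t := sinh_pos_iff.2 ht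
    exact div_neg_of_neg_of_pos (sub_neg.2 (mul_sinh_add_sq_mul_cosh_lt (ne_of_gt ht)))
      (mul_pos (pow_pos ht 3) (pow_pos hs 2))

theorem hasDerivAt_log_tanh_div_self {x : ℝ} (hx : x ≠ 0) :
    HasDerivAt (fun y => log (tanh y / y)) (2 / sinh (2 * x) - x⁻¹) x := by
  have hs : sinh x ≠ 0 := sinh_ne_zero.2 hx
  have hc : cosh x ≠ 0 := (cosh_pos x).ne'
  have h := (((hasDerivAt_sinh x).log hs).sub ((hasDerivAt_cosh x).log hc)).sub (hasDerivAt_log hx)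
  have hderiv : cosh x / sinh x - sinh x / cosh x - x⁻¹ = 2 / sinh (2 * x) - x⁻¹ := by
    rw [sinh_two_mul]
    field_simp
    linear_combination x * cosh_sq x
  refine (hderiv ▸ h).congr_of_eventuallyEq ?_
  filter_upwards [isOpen_ne.mem_nhds hx] with z hz
  have hsz : sinh z ≠ 0 := sinh_ne_zero.2 hz
  have hcz : cosh z ≠ 0 := (cosh_pos z).ne'
  rw [tanh_eq_sinh_div_cosh, log_div (div_ne_zero hsz hcz) hz, log_div hsz hcz]
  rfl

theorem tendsto_log_tanh_div_self : Tendsto (fun x => log (tanh x / x)) (𝓝[≠] 0) (𝓝 0) := by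
  have h0 := (hasDerivAt_sinh 0).div (hasDerivAt_cosh 0) (cosh_pos 0).ne'
  have h1 : Tendsto (fun x => tanh x / x) (𝓝[≠] 0) (𝓝 1) := by
    simpa [slope_fun_def_field, ← tanh_eq_sinh_div_cosh] using hasDerivAt_iff_tendsto_slope.1 h0
  simpa [Function.comp_def] using (continuousAt_log one_ne_zero).tendsto.comp h1

theorem hasDerivAt_log_sub_sq_div_sq {r x : ℝ} (hr : r ≠ 0) (hx : x ^ 2 ≠ r ^ 2) :
    HasDerivAt (fun y => log ((r ^ 2 - y ^ 2) / r ^ 2)) (-(2 * x) / (r ^ 2 - x ^ 2)) x := by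
  have hne : r ^ 2 - x ^ 2 ≠ 0 := sub_ne_zero.2 hx.symm
  have h := (((hasDerivAt_pow 2 x).const_sub (r ^ 2)).div_const (r ^ 2)).log
    (div_ne_zero hne (pow_ne_zero 2 hr))
  refine h.congr_deriv ?_
  field_simp
  ring

theorem tendsto_log_sub_sq_div_sq {r : ℝ} (hr : r ≠ 0) :
    Tendsto (fun x => log ((r ^ 2 - x ^ 2) / r ^ 2)) (𝓝 0) (𝓝 0) := by
  have h : ContinuousAt (fun x => log ((r ^ 2 - x ^ 2) / r ^ 2)) 0 :=
    ((continuousAt_const.sub (continuousAt_id.pow 2)).div_const _).log (by simp [hr])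
  simpa [hr] using h.tendsto

theorem strictAntiOn_deriv_log_tanh_div_self_div_deriv_log_sub_sq (r : ℝ) :
    StrictAntiOn (fun x => (2 / sinh (2 * x) - x⁻¹) / (-(2 * x) / (r ^ 2 - x ^ 2))) (Ioo 0 r) := by
  have hratio : ∀ x ∈ Ioo 0 r, (2 / sinh (2 * x) - x⁻¹) / (-(2 * x) / (r ^ 2 - x ^ 2)) =
      (r ^ 2 - x ^ 2) * (2 * (((2 * x) ^ 2)⁻¹ - (2 * x * sinh (2 * x))⁻¹)) := by
    intro x hx
    have hx0 : x ≠ 0 := hx.1.ne'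
    have hs : sinh (2 * x) ≠ 0 := sinh_ne_zero.2 (by linarith [hx.1])
    have hsq : r ^ 2 - x ^ 2 ≠ 0 := (sub_pos.2 (pow_lt_pow_left₀ hx.2 hx.1.le two_ne_zero)).ne'
    field_simp
    ring
  intro x hx y hy hxy
  simp only [hratio x hx, hratio y hy]
  exact mul_lt_mul'' (sub_lt_sub_left (pow_lt_pow_left₀ hxy hx.1.le two_ne_zero) _)
    (mul_lt_mul_of_pos_left (strictAntiOn_inv_sq_sub_inv_mul_sinh (by simpa using hx.1)
      (by simpa using hy.1) (by linarith)) two_pos)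
    (sub_nonneg.2 (pow_le_pow_left₀ hy.1.le hy.2.le 2))
    (mul_nonneg zero_le_two (sub_pos.2 (inv_mul_sinh_lt_inv_sq (by linarith [hy.1]))).le)

theorem stmt_12 (r : ℝ) (hr : 0 < r) :
    StrictAntiOn
      (fun x : ℝ => Real.log (Real.tanh x / x) / Real.log ((r ^ 2 - x ^ 2) / r ^ 2))
      (Set.Ioo 0 r) := by
  have hsq : ∀ x ∈ Ioo 0 r, x ^ 2 < r ^ 2 := fun x hx => pow_lt_pow_left₀ hx.2 hx.1.le two_ne_zero
  exact strictAntiOn_div_of_strictAntiOn_deriv_div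
    (fun x hx => hasDerivAt_log_tanh_div_self hx.1.ne')
    (fun x hx => hasDerivAt_log_sub_sq_div_sq hr.ne' (hsq x hx).ne)
    (tendsto_log_tanh_div_self.mono_left (nhdsGT_le_nhdsNE 0))
    ((tendsto_log_sub_sq_div_sq hr.ne').mono_left nhdsWithin_le_nhds)
    (fun x hx => div_neg_of_neg_of_pos (by linarith [hx.1]) (sub_pos.2 (hsq x hx)))
    (strictAntiOn_deriv_log_tanh_div_self_div_deriv_log_sub_sq r)
end

section
/- The function x ↦ log((tan x)/x) / log(π²/(π² − 4x²)) is strictly increasing on the open interval (0, π/2). -/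
open Real Set Finset Filter Topology

/-!
Both logarithms tend to `0` at `0+`, so by Cauchy's mean value theorem on `(0, x)` their quotient
is increasing as soon as the quotient of their derivatives is (the monotone form of l'Hôpital's
rule). That quotient is `derivRatio (2 * x)`, and the derivative of `derivRatio` has the sign of
`derivRatioNumer t = 2 π² sin² t - t (π² + t²) sin t - t² (π² - t²) cos t`. Its positivity
on `(0, π)` comes from the alternating Taylor bounds for `sin` and `cos`, applied at `t` when
`t ≤ 2` and at `π - t` when `t > 2`: what is left are two polynomial inequalities.
-/

noncomputable def cosTaylor (n : ℕ) (x : ℝ) : ℝ :=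
  ∑ k ∈ range n, (-1) ^ k * x ^ (2 * k) / (2 * k).factorial

noncomputable def sinTaylor (n : ℕ) (x : ℝ) : ℝ :=
  ∑ k ∈ range n, (-1) ^ k * x ^ (2 * k + 1) / (2 * k + 1).factorial

lemma hasDerivAt_sinTaylor (n : ℕ) (x : ℝ) : HasDerivAt (sinTaylor n) (cosTaylor n x) x := by
  unfold sinTaylor cosTaylor
  refine (HasDerivAt.fun_sum fun k _ =>
    ((hasDerivAt_pow _ x).const_mul _).div_const _).congr_deriv ?_
  refine Finset.sum_congr rfl fun k _ => ?_
  rw [Nat.factorial_succ]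
  push_cast
  field_simp

lemma hasDerivAt_cosTaylor_succ (n : ℕ) (x : ℝ) :
    HasDerivAt (cosTaylor (n + 1)) (-sinTaylor n x) x := by
  unfold sinTaylor cosTaylor
  refine (HasDerivAt.fun_sum fun k _ =>
    ((hasDerivAt_pow _ x).const_mul _).div_const _).congr_deriv ?_
  rw [Finset.sum_range_succ', ← Finset.sum_neg_distrib]
  simp only [mul_zero, Nat.cast_zero, zero_mul, zero_div, add_zero]
  refine Finset.sum_congr rfl fun k _ => ?_
  rw [show 2 * (k + 1) = 2 * k + 1 + 1 by ring, Nat.factorial_succ]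
  push_cast
  field_simp
  ring

lemma nonneg_of_hasDerivAt_of_nonneg {u u' : ℝ → ℝ} (hu : ∀ x, HasDerivAt u (u' x) x)
    (hu0 : u 0 = 0) (hu' : ∀ x, 0 ≤ x → 0 ≤ u' x) {x : ℝ} (hx : 0 ≤ x) : 0 ≤ u x := by
  have hmono : MonotoneOn u (Ici 0) :=
    monotoneOn_of_hasDerivWithinAt_nonneg (convex_Ici 0)
      (fun y _ => (hu y).continuousAt.continuousWithinAt) (fun y _ => (hu y).hasDerivWithinAt)
      (fun y hy => hu' y (interior_subset hy))
  simpa [hu0] using hmono self_mem_Ici hx hx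

lemma sin_cos_taylor_alternating (n : ℕ) {x : ℝ} (hx : 0 ≤ x) :
    0 ≤ (-1) ^ (n + 1) * (cos x - cosTaylor (n + 1) x) ∧
      0 ≤ (-1) ^ (n + 1) * (sin x - sinTaylor (n + 1) x) := by
  induction n generalizing x with
  | zero =>
    norm_num [cosTaylor, sinTaylor]
    exact ⟨cos_le_one x, sin_le hx⟩
  | succ n ih =>
    -- each new bound is the previous one integrated from `0`
    have hcos {x : ℝ} (hx : 0 ≤ x) : 0 ≤ (-1) ^ (n + 2) * (cos x - cosTaylor (n + 2) x) := by
      refine nonneg_of_hasDerivAt_of_nonneg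
        (fun y => ((hasDerivAt_cos y).sub (hasDerivAt_cosTaylor_succ (n + 1) y)).const_mul _)
        (by simp [cosTaylor, Finset.sum_range_succ']) (fun y hy => ?_) hx
      convert (ih hy).2 using 1
      ring
    refine ⟨hcos hx, nonneg_of_hasDerivAt_of_nonneg
      (fun y => ((hasDerivAt_sin y).sub (hasDerivAt_sinTaylor (n + 2) y)).const_mul _)
      (by simp [sinTaylor]) (fun y hy => ?_) hx⟩
    exact hcos hy

lemma cos_le_cosTaylor (n : ℕ) {x : ℝ} (hx : 0 ≤ x) : cos x ≤ cosTaylor (2 * n + 1) x := by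
  have := (sin_cos_taylor_alternating (2 * n) hx).1
  norm_num [pow_succ, pow_mul] at this
  linarith

lemma cosTaylor_le_cos (n : ℕ) {x : ℝ} (hx : 0 ≤ x) : cosTaylor (2 * n + 2) x ≤ cos x := by
  have := (sin_cos_taylor_alternating (2 * n + 1) hx).1
  norm_num [pow_succ, pow_mul] at this
  linarith

lemma sin_le_sinTaylor (n : ℕ) {x : ℝ} (hx : 0 ≤ x) : sin x ≤ sinTaylor (2 * n + 1) x := by
  have := (sin_cos_taylor_alternating (2 * n) hx).2
  norm_num [pow_succ, pow_mul] at this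
  linarith

lemma strictMonoOn_Ioo_of_hasDerivAt_pos {f f' : ℝ → ℝ} {a b : ℝ}
    (hf : ∀ x ∈ Ioo a b, HasDerivAt f (f' x) x) (hf' : ∀ x ∈ Ioo a b, 0 < f' x) :
    StrictMonoOn f (Ioo a b) := by
  refine strictMonoOn_of_hasDerivWithinAt_pos (f' := f') (convex_Ioo a b)
    (fun x hx => (hf x hx).continuousAt.continuousWithinAt) (fun x hx => ?_) (fun x hx => ?_)
  · rw [interior_Ioo] at hx ⊢
    exact (hf x hx).hasDerivWithinAt
  · exact hf' x (interior_subset hx)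

theorem strictMonoOn_div_of_strictMonoOn_deriv_div {f g f' g' : ℝ → ℝ} {a b : ℝ}
    (hfa : Tendsto f (𝓝[>] a) (𝓝 0)) (hga : Tendsto g (𝓝[>] a) (𝓝 0))
    (hf : ∀ x ∈ Ioo a b, HasDerivAt f (f' x) x) (hg : ∀ x ∈ Ioo a b, HasDerivAt g (g' x) x)
    (hg' : ∀ x ∈ Ioo a b, 0 < g' x) (hmono : StrictMonoOn (fun x => f' x / g' x) (Ioo a b)) :
    StrictMonoOn (fun x => f x / g x) (Ioo a b) := by
  have hlim {u : ℝ → ℝ} {u' x : ℝ} (hu : HasDerivAt u u' x) :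
      Tendsto u (𝓝[<] x) (𝓝 (u x)) :=
    hu.continuousAt.tendsto.mono_left nhdsWithin_le_nhds
  have hsub {x} (hx : x ∈ Ioo a b) : Ioo a x ⊆ Ioo a b := Ioo_subset_Ioo_right hx.2.le
  have hg_pos {x} (hx : x ∈ Ioo a b) : 0 < g x := by
    obtain ⟨c, hc, hgc⟩ := exists_ratio_hasDerivAt_eq_ratio_slope' id (fun _ => 1) hx.1 g g'
      (fun y _ => hasDerivAt_id y) (fun y hy => hg y (hsub hx hy))
      (tendsto_nhdsWithin_of_tendsto_nhds tendsto_id) hga (hlim (hasDerivAt_id x)) (hlim (hg x hx))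
    rw [sub_zero, mul_one, id] at hgc
    rw [hgc]
    exact mul_pos (sub_pos.2 hx.1) (hg' c (hsub hx hc))
  have hdiv_lt {x} (hx : x ∈ Ioo a b) : f x / g x < f' x / g' x := by
    obtain ⟨c, hc, hfc⟩ := exists_ratio_hasDerivAt_eq_ratio_slope' f f' hx.1 g g'
      (fun y hy => hf y (hsub hx hy)) (fun y hy => hg y (hsub hx hy)) hfa hga
      (hlim (hf x hx)) (hlim (hg x hx))
    calc f x / g x = f' c / g' c := by
          rw [div_eq_div_iff (hg_pos hx).ne' (hg' c (hsub hx hc)).ne']; linarith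
      _ < f' x / g' x := hmono (hsub hx hc) hx hc.2
  refine strictMonoOn_Ioo_of_hasDerivAt_pos
    (fun x hx => (hf x hx).div (hg x hx) (hg_pos hx).ne') fun x hx => ?_
  have hlt := hdiv_lt hx
  rw [div_lt_div_iff₀ (hg_pos hx) (hg' x hx)] at hlt
  exact div_pos (by linarith) (pow_pos (hg_pos hx) 2)

noncomputable def derivRatio (t : ℝ) : ℝ := (π ^ 2 - t ^ 2) * (t - sin t) / (2 * t ^ 2 * sin t)

noncomputable def derivRatioNumer (t : ℝ) : ℝ :=
  2 * π ^ 2 * sin t ^ 2 - t * (π ^ 2 + t ^ 2) * sin t - t ^ 2 * (π ^ 2 - t ^ 2) * cos t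

lemma hasDerivAt_derivRatio {t : ℝ} (ht : t ≠ 0) (hs : sin t ≠ 0) :
    HasDerivAt derivRatio (2 * t * derivRatioNumer t / (2 * t ^ 2 * sin t) ^ 2) t := by
  have hnum : HasDerivAt (fun t => (π ^ 2 - t ^ 2) * (t - sin t))
      (-(2 * t) * (t - sin t) + (π ^ 2 - t ^ 2) * (1 - cos t)) t := by
    refine (((hasDerivAt_pow 2 t).const_sub _).mul
      ((hasDerivAt_id' t).fun_sub (hasDerivAt_sin t))).congr_deriv ?_
    push_cast; ring
  have hden : HasDerivAt (fun t => 2 * t ^ 2 * sin t) (4 * t * sin t + 2 * t ^ 2 * cos t) t := by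
    refine (((hasDerivAt_pow 2 t).const_mul 2).mul (hasDerivAt_sin t)).congr_deriv ?_
    push_cast; ring
  refine (hnum.div hden (by positivity)).congr_deriv ?_
  unfold derivRatioNumer
  ring

/-- With `q = π ^ 2`, this is the lower bound for `derivRatioNumer t` given by the Taylor bounds
`cos (2 * t) ≤ cosTaylor 7 (2 * t)`, `sin t ≤ sinTaylor 5 t` and `cos t ≤ cosTaylor 5 t`. -/
lemma taylorLowerBound_pos_left {t : ℝ} (h0 : 0 < t) (h2 : t ≤ 2) {q : ℝ}
    (hq1 : 9.8696002 < q) (hq2 : q < 9.8696066) :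
    0 < (7 * q / 180 - 1 / 3) * t ^ 6 + (1 / 30 - q / 210) * t ^ 8
      + (11 * q / 43200 - 1 / 840) * t ^ 10 + (1 / 45360 - 4 * q / 467775) * t ^ 12 := by
  have hs0 : 0 < t ^ 2 := by positivity
  have hs4 : t ^ 2 ≤ 4 := by nlinarith
  have hfactor : 0 < (7 * q / 180 - 1 / 3) + (1 / 30 - q / 210) * t ^ 2
      + (11 * q / 43200 - 1 / 840) * t ^ 4 + (1 / 45360 - 4 * q / 467775) * t ^ 6 := by
    nlinarith [sq_nonneg (t ^ 2 - 4), mul_nonneg (sub_nonneg.2 hs4) hs0.le,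
      mul_nonneg (mul_nonneg (sub_nonneg.2 hs4) hs0.le) hs0.le]
  have := mul_pos hfactor (pow_pos h0 6)
  linarith

lemma derivRatioNumer_pos_of_le_two {t : ℝ} (h0 : 0 < t) (h2 : t ≤ 2) :
    0 < derivRatioNumer t := by
  have hq1 : 9.8696002 < π ^ 2 := by nlinarith [pi_gt_d6]
  have hq2 : π ^ 2 < 9.8696066 := by nlinarith [pi_lt_d6, pi_gt_d6]
  have k2 : 0 ≤ t * (π ^ 2 + t ^ 2) := by positivity
  have k3 : 0 ≤ t ^ 2 * (π ^ 2 - t ^ 2) := mul_nonneg (sq_nonneg t) (by nlinarith)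
  have m1 := mul_le_mul_of_nonneg_left
    (cos_le_cosTaylor 3 (by linarith : (0 : ℝ) ≤ 2 * t)) (sq_nonneg π)
  have m2 := mul_le_mul_of_nonneg_left (sin_le_sinTaylor 2 h0.le) k2
  have m3 := mul_le_mul_of_nonneg_left (cos_le_cosTaylor 2 h0.le) k3
  norm_num [cosTaylor, sinTaylor, sum_range_succ, Nat.factorial] at m1 m2 m3
  rw [derivRatioNumer, sin_sq_eq_half_sub]
  linarith [taylorLowerBound_pos_left h0 h2 hq1 hq2]

/-- With `p = π` and `e = π - t`, `e ^ 2` times this polynomial is the lower bound for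
`derivRatioNumer t` given by the Taylor bounds of `cos (2 * e)`, `sin e` and `cos e`. -/
lemma taylorLowerBound_pos_right {e : ℝ} (h0 : 0 < e) (h2 : e ≤ 1.15) {p : ℝ}
    (hp1 : 3.141592 < p) (hp2 : p < 3.141593) :
    0 < p ^ 2 + (p - 2 * p ^ 3 / 3) * e + (7 * p ^ 2 / 6) * e ^ 2
      + (p ^ 3 / 15 - 3 * p / 2) * e ^ 3
      + (1 / 3 - 31 * p ^ 2 / 360) * e ^ 4 + (17 * p / 120 - p ^ 3 / 360) * e ^ 5
      + (p ^ 2 / 1680 - 1 / 30) * e ^ 6 - (p / 180) * e ^ 7 + e ^ 8 / 720 := by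
  have hp0 : 0 < p := by linarith
  have q1 : 9.8696002 < p ^ 2 := by nlinarith
  have q2 : p ^ 2 < 9.8696066 := by nlinarith
  have c1 : 31.006257 < p ^ 3 := by nlinarith [mul_lt_mul_of_pos_left q1 hp0]
  have c2 : p ^ 3 < 31.006287 := by nlinarith [mul_lt_mul_of_pos_left q2 hp0]
  have e4 : e ^ 4 ≤ 1.15 * e ^ 3 := by nlinarith [pow_pos h0 3]
  have e6 : e ^ 6 ≤ 1.15 ^ 3 * e ^ 3 := by nlinarith [pow_pos h0 3, pow_pos h0 2]
  have e7 : e ^ 7 ≤ 1.15 ^ 4 * e ^ 3 := by nlinarith [pow_pos h0 3, pow_pos h0 4]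
  have e5 : 0 ≤ e ^ 5 := by positivity
  have e8 : 0 ≤ e ^ 8 := by positivity
  nlinarith [sq_nonneg (e - 1.15), mul_pos h0 h0, pow_pos h0 3, sq_nonneg (e - 1),
    sq_nonneg (e * (e - 1.15)), sq_nonneg (e * (e - 1))]

lemma derivRatioNumer_pos_of_two_lt {t : ℝ} (h2 : 2 < t) (hπ : t < π) :
    0 < derivRatioNumer t := by
  obtain ⟨e, rfl⟩ : ∃ e, t = π - e := ⟨π - t, by ring⟩
  have he0 : 0 < e := by linarith
  have he1 : e ≤ 1.15 := by linarith [pi_lt_d6]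
  have k2 : 0 ≤ (π - e) * (π ^ 2 + (π - e) ^ 2) := by positivity
  have k3 : 0 ≤ (π - e) ^ 2 * (π ^ 2 - (π - e) ^ 2) := mul_nonneg (sq_nonneg _) (by nlinarith)
  have m1 := mul_le_mul_of_nonneg_left
    (cos_le_cosTaylor 2 (by linarith : (0 : ℝ) ≤ 2 * e)) (sq_nonneg π)
  have m2 := mul_le_mul_of_nonneg_left (sin_le_sinTaylor 1 he0.le) k2
  have m3 := mul_le_mul_of_nonneg_left (cosTaylor_le_cos 1 he0.le) k3
  norm_num [cosTaylor, sinTaylor, sum_range_succ, Nat.factorial] at m1 m2 m3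
  have hq := mul_pos (pow_pos he0 2) (taylorLowerBound_pos_right he0 he1 pi_gt_d6 pi_lt_d6)
  rw [derivRatioNumer, sin_sq_eq_half_sub, sin_pi_sub, cos_pi_sub,
    show 2 * (π - e) = 2 * π - 2 * e by ring, cos_two_pi_sub]
  linarith

lemma derivRatioNumer_pos {t : ℝ} (h0 : 0 < t) (hπ : t < π) : 0 < derivRatioNumer t := by
  rcases le_or_gt t 2 with h2 | h2
  · exact derivRatioNumer_pos_of_le_two h0 h2
  · exact derivRatioNumer_pos_of_two_lt h2 hπ

lemma strictMonoOn_derivRatio : StrictMonoOn derivRatio (Ioo 0 π) := by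
  refine strictMonoOn_Ioo_of_hasDerivAt_pos
    (fun t ht => hasDerivAt_derivRatio ht.1.ne' (sin_pos_of_pos_of_lt_pi ht.1 ht.2).ne')
    fun t ht => ?_
  obtain ⟨ht0, htπ⟩ := ht
  have hnum := derivRatioNumer_pos ht0 htπ
  have hsin := sin_pos_of_pos_of_lt_pi ht0 htπ
  positivity

lemma tendsto_log_tan_div_self : Tendsto (fun x => log (tan x / x)) (𝓝[>] 0) (𝓝 0) := by
  have hslope := (hasDerivAt_tan (x := 0) (by simp)).tendsto_slope_zero_right
  simp only [cos_zero, one_pow, div_one, zero_add, tan_zero, sub_zero, smul_eq_mul] at hslope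
  have := (continuousAt_log one_ne_zero).tendsto.comp
    (hslope.congr fun x => inv_mul_eq_div x (tan x))
  rwa [log_one] at this

lemma tendsto_log_pi_sq_div :
    Tendsto (fun x => log (π ^ 2 / (π ^ 2 - 4 * x ^ 2))) (𝓝[>] 0) (𝓝 0) := by
  have : ContinuousAt (fun x => log (π ^ 2 / (π ^ 2 - 4 * x ^ 2))) 0 := by
    have : π ^ 2 ≠ 0 := by positivity
    fun_prop (disch := simp [this])
  simpa using this.tendsto.mono_left nhdsWithin_le_nhds

lemma hasDerivAt_log_tan_div_self {x : ℝ} (hx : x ≠ 0) (hs : sin x ≠ 0) (hc : cos x ≠ 0) :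
    HasDerivAt (fun y => log (tan y / y)) (1 / (sin x * cos x) - 1 / x) x := by
  have htan : tan x ≠ 0 := by rw [tan_eq_sin_div_cos]; positivity
  refine (((hasDerivAt_tan hc).fun_div (hasDerivAt_id' x) hx).log
    (div_ne_zero htan hx)).congr_deriv ?_
  rw [tan_eq_sin_div_cos]
  field_simp

lemma hasDerivAt_log_pi_sq_div {x : ℝ} (hx : π ^ 2 - 4 * x ^ 2 ≠ 0) :
    HasDerivAt (fun y => log (π ^ 2 / (π ^ 2 - 4 * y ^ 2))) (8 * x / (π ^ 2 - 4 * x ^ 2)) x := by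
  have hπ : π ^ 2 ≠ 0 := by positivity
  refine (((hasDerivAt_const x (π ^ 2)).fun_div
    (((hasDerivAt_pow 2 x).const_mul 4).const_sub _) hx).log (div_ne_zero hπ hx)).congr_deriv ?_
  field_simp
  push_cast
  ring

lemma derivRatio_two_mul {x : ℝ} (hx : x ≠ 0) (hs : sin x ≠ 0) (hc : cos x ≠ 0) :
    (1 / (sin x * cos x) - 1 / x) / (8 * x / (π ^ 2 - 4 * x ^ 2)) = derivRatio (2 * x) := by
  rw [derivRatio, sin_two_mul]
  field_simp
  ring

theorem stmt_13 :
    StrictMonoOn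
      (fun x : ℝ => Real.log (Real.tan x / x) / Real.log (π ^ 2 / (π ^ 2 - 4 * x ^ 2)))
      (Set.Ioo 0 (π / 2)) := by
  have hsin {x} (hx : x ∈ Ioo 0 (π / 2)) : sin x ≠ 0 :=
    (sin_pos_of_pos_of_lt_pi hx.1 (by linarith [hx.2, pi_pos])).ne'
  have hcos {x} (hx : x ∈ Ioo 0 (π / 2)) : cos x ≠ 0 :=
    (cos_pos_of_mem_Ioo ⟨by linarith [hx.1, pi_pos], hx.2⟩).ne'
  have hden {x} (hx : x ∈ Ioo 0 (π / 2)) : 0 < π ^ 2 - 4 * x ^ 2 := by nlinarith [hx.1, hx.2]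
  refine strictMonoOn_div_of_strictMonoOn_deriv_div tendsto_log_tan_div_self tendsto_log_pi_sq_div
    (fun x hx => hasDerivAt_log_tan_div_self hx.1.ne' (hsin hx) (hcos hx))
    (fun x hx => hasDerivAt_log_pi_sq_div (hden hx).ne')
    (fun x hx => div_pos (by linarith [hx.1]) (hden hx)) ?_
  have hmaps : MapsTo (fun x : ℝ => 2 * x) (Ioo 0 (π / 2)) (Ioo 0 π) :=
    fun x hx => ⟨by linarith [hx.1], by linarith [hx.2]⟩
  exact (strictMonoOn_derivRatio.comp ((strictMono_mul_left_of_pos two_pos).strictMonoOn _)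
    hmaps).congr fun x hx => (derivRatio_two_mul hx.1.ne' (hsin hx) (hcos hx)).symm
end

section
/- The limit of log((tanh x)/x) / log((π² − 4x²)/π²) as x tends to 0 from the right equals π²/12. -/
/-!
Near `1` we have `log u ~ u - 1`, and both arguments of the logarithms tend to `1`:
`(π² - 4x²)/π² - 1 = -4x²/π²` exactly, while `tanh x / x - 1 ~ -x²/3` because
`tanh x - x = (sinh x - x cosh x) / cosh x` and one application of L'Hôpital's rule gives
`sinh x - x cosh x ~ -x³/3`. Hence the quotient of logarithms is asymptotic to
`(-x²/3) / (-4x²/π²) = π²/12`.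
-/

open Real Topology Filter Asymptotics

namespace Real

theorem isEquivalent_log_sub_one : log ~[𝓝 1] fun x => x - 1 := by
  simpa using! (hasDerivAt_log one_ne_zero).isLittleO

theorem tendsto_sinh_div_self : Tendsto (fun x => sinh x / x) (𝓝[≠] 0) (𝓝 1) :=
  (isEquivalent_iff_tendsto_one self_mem_nhdsWithin).mp (isEquivalent_sinh.mono nhdsWithin_le_nhds)

theorem isEquivalent_sinh_sub_mul_cosh :
    (fun x => sinh x - x * cosh x) ~[𝓝[≠] 0] fun x => -x ^ 3 / 3 := by
  refine isEquivalent_of_tendsto_one <|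
    HasDerivAt.lhopital_zero_nhdsNE (f' := fun x => -(x * sinh x)) (g' := fun x => -x ^ 2)
      ?_ ?_ ?_ ?_ ?_ (tendsto_sinh_div_self.congr' ?_)
  · filter_upwards with x
    exact ((hasDerivAt_sinh x).sub ((hasDerivAt_id' x).mul (hasDerivAt_cosh x))).congr_deriv
      (by ring)
  · filter_upwards with x
    exact ((hasDerivAt_pow 3 x).neg.div_const 3).congr_deriv (by ring)
  · filter_upwards [self_mem_nhdsWithin] with x hx
    simpa using hx
  · exact tendsto_nhdsWithin_of_tendsto_nhds <|
      (by fun_prop : Continuous fun x => sinh x - x * cosh x).tendsto' 0 0 (by simp)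
  · exact tendsto_nhdsWithin_of_tendsto_nhds <|
      (by fun_prop : Continuous fun x : ℝ => -x ^ 3 / 3).tendsto' 0 0 (by simp)
  · filter_upwards [self_mem_nhdsWithin] with x (hx : x ≠ 0)
    field_simp

theorem isEquivalent_tanh_sub_self :
    (fun x => tanh x - x) ~[𝓝[≠] 0] fun x => -x ^ 3 / 3 := by
  have hcosh : cosh ~[𝓝[≠] 0] fun _ => 1 :=
    (isEquivalent_const_iff_tendsto one_ne_zero).mpr <|
      tendsto_nhdsWithin_of_tendsto_nhds (by simpa using continuous_cosh.tendsto 0)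
  refine (isEquivalent_sinh_sub_mul_cosh.div hcosh).congr_left ?_ |>.congr_right ?_
  · filter_upwards with x
    simp only [Pi.div_apply, tanh_eq_sinh_div_cosh]
    field_simp
  · filter_upwards with x
    simp

theorem isEquivalent_tanh_div_self_sub_one :
    (fun x => tanh x / x - 1) ~[𝓝[≠] 0] fun x => -x ^ 2 / 3 := by
  refine (isEquivalent_tanh_sub_self.div (IsEquivalent.refl (u := id))).congr_left ?_
    |>.congr_right ?_
  · filter_upwards [self_mem_nhdsWithin] with x (hx : x ≠ 0)
    simp only [Pi.div_apply, id]
    field_simp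
  · filter_upwards [self_mem_nhdsWithin] with x (hx : x ≠ 0)
    simp only [Pi.div_apply, id]
    field_simp

theorem tendsto_tanh_div_self : Tendsto (fun x => tanh x / x) (𝓝[≠] 0) (𝓝 1) := by
  have h : Tendsto (fun x : ℝ => -x ^ 2 / 3) (𝓝[≠] 0) (𝓝 0) :=
    tendsto_nhdsWithin_of_tendsto_nhds <|
      (by fun_prop : Continuous fun x : ℝ => -x ^ 2 / 3).tendsto' 0 0 (by simp)
  simpa using (isEquivalent_tanh_div_self_sub_one.symm.tendsto_nhds h).add_const 1

end Real

theorem stmt_17 :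
    Tendsto (fun x : ℝ => Real.log (Real.tanh x / x) / Real.log ((π ^ 2 - 4 * x ^ 2) / π ^ 2))
      (𝓝[>] 0) (𝓝 (π ^ 2 / 12)) := by
  have hnum : (fun x => log (tanh x / x)) ~[𝓝[>] 0] fun x => -x ^ 2 / 3 :=
    (isEquivalent_log_sub_one.comp_tendsto tendsto_tanh_div_self).trans
      isEquivalent_tanh_div_self_sub_one |>.mono (nhdsGT_le_nhdsNE 0)
  have hden : (fun x => log ((π ^ 2 - 4 * x ^ 2) / π ^ 2)) ~[𝓝[>] 0]
      fun x => -4 * x ^ 2 / π ^ 2 := by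
    have hq : Tendsto (fun x : ℝ => (π ^ 2 - 4 * x ^ 2) / π ^ 2) (𝓝[>] 0) (𝓝 1) :=
      tendsto_nhdsWithin_of_tendsto_nhds <|
        (by fun_prop : Continuous fun x : ℝ => (π ^ 2 - 4 * x ^ 2) / π ^ 2).tendsto' 0 1
          (by simp [pi_ne_zero])
    refine (isEquivalent_log_sub_one.comp_tendsto hq).congr_right ?_
    filter_upwards with x
    simp only [Function.comp]
    field_simp
    ring
  refine (hnum.div hden).symm.tendsto_nhds (tendsto_const_nhds.congr' ?_)
  filter_upwards [self_mem_nhdsWithin] with x (hx : 0 < x)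
  simp only [Pi.div_apply]
  field_simp
  ring
end
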